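/- Let (M; ∨, ∧, ⊕, ⊖, 0) be a wEMV-algebra, and define M₁ := {x ∈ M : x ≤ a for some idempotent a ∈ M} and M₂ := {x ∈ M : x ∧ a = 0 for every idempotent a ∈ M}. Then M₁ and M₂ contain 0 and are closed under ∨, ∧, ⊕ and ⊖ (so both are wEMV-subalgebras of M, M₂ having no nonzero idempotent). Moreover: (a) if x ∈ M₁ and y ∈ M₂, then x ∧ y = 0 and x ⊕ y = x ∨ y; (b) if x₁, y₁ ∈ M₁ and x₂, y₂ ∈ M₂ and x₁ ∨ x₂ = y₁ ∨ y₂, then x₁ = y₁ and x₂ = y₂; the same conclusion holds if x₁ ⊕ x₂ = y₁ ⊕ y₂. -/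

import Mathlib

universe u

class WEMV (M : Type u) extends DistribLattice M, Zero M where
  oplus : M → M → M
  ominus : M → M → M
  zero_le : ∀ x : M, 0 ≤ x
  oplus_comm : ∀ x y : M, oplus x y = oplus y x
  oplus_assoc : ∀ x y z : M, oplus (oplus x y) z = oplus x (oplus y z)
  oplus_zero : ∀ x : M, oplus x 0 = x
  ominus_oplus_le : ∀ x y : M, ominus (oplus x y) x ≤ y
  oplus_ominus : ∀ x y : M, oplus x (ominus y x) = x ⊔ y
  ominus_inf : ∀ x y : M, ominus x (x ⊓ y) = ominus x y
  ominus_ominus : ∀ x z : M, ominus z (ominus z x) = x ⊓ z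
  ominus_sup : ∀ x y z : M, ominus z (x ⊔ y) = ominus z x ⊓ ominus z y
  inf_ominus : ∀ x y z : M, ominus (x ⊓ y) z = ominus x z ⊓ ominus y z
  ominus_oplus_assoc : ∀ x y z : M, ominus x (oplus y z) = ominus (ominus x y) z
  oplus_sup : ∀ x y z : M, oplus x (y ⊔ z) = oplus x y ⊔ oplus x z

open WEMV

/-!
Idempotents are closed under `⊕`, so `M₁` (`idemBounded`) is the union of the down-sets of a
directed family of idempotents, while `M₂` (`idemDisjoint`) is a down-set closed under `⊕` because
`a ∧ (x ⊕ y) ≤ (a ∧ x) ⊕ (a ∧ y)`. Elements of `M₁` and `M₂` are orthogonal, and for orthogonal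
elements `⊕` is `∨`. A join `x₁ ∨ x₂` with `x₁ ∈ M₁`, `x₂ ∈ M₂` is decomposed back as
`x₁ = (x₁ ∨ x₂) ∧ c` for any idempotent `c ≥ x₁` and `x₂ = (x₁ ∨ x₂) ⊖ x₁`.
-/

namespace WEMV

variable {M : Type u} [WEMV M]

def IsIdem (a : M) : Prop := oplus a a = a

variable (M) in
def idemBounded : Set M := {x | ∃ a : M, IsIdem a ∧ x ≤ a}

variable (M) in
def idemDisjoint : Set M := {x | ∀ a : M, IsIdem a → x ⊓ a = 0}

lemma eq_zero_of_le_zero {x : M} (h : x ≤ 0) : x = 0 := le_antisymm h (zero_le x)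

lemma zero_oplus (x : M) : oplus 0 x = x := by
  rw [oplus_comm, oplus_zero]

lemma oplus_le_oplus_left (x : M) {y z : M} (h : y ≤ z) : oplus x y ≤ oplus x z := by
  rw [← sup_eq_right.mpr h, oplus_sup]
  exact le_sup_left

lemma oplus_le_oplus {a b c d : M} (hac : a ≤ c) (hbd : b ≤ d) : oplus a b ≤ oplus c d :=
  calc oplus a b ≤ oplus a d := oplus_le_oplus_left a hbd
    _ = oplus d a := oplus_comm a d
    _ ≤ oplus d c := oplus_le_oplus_left d hac
    _ = oplus c d := oplus_comm d c

lemma le_oplus_left (x y : M) : x ≤ oplus x y :=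
  calc x = oplus x 0 := (oplus_zero x).symm
    _ ≤ oplus x y := oplus_le_oplus_left x (zero_le y)

lemma le_oplus_right (x y : M) : y ≤ oplus x y :=
  oplus_comm y x ▸ le_oplus_left y x

lemma ominus_zero (x : M) : ominus x 0 = x :=
  calc ominus x 0 = oplus 0 (ominus x 0) := (zero_oplus _).symm
    _ = x := by rw [oplus_ominus, sup_eq_right.mpr (zero_le x)]

lemma ominus_le_ominus_right {x y : M} (z : M) (h : x ≤ y) : ominus x z ≤ ominus y z := by
  rw [← inf_eq_left.mpr h, inf_ominus]
  exact inf_le_right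

lemma ominus_le_self (x y : M) : ominus x y ≤ x :=
  (ominus_le_ominus_right y (le_oplus_right y x)).trans (ominus_oplus_le y x)

lemma ominus_eq_self_of_inf_eq_zero {x y : M} (h : x ⊓ y = 0) : ominus x y = x := by
  rw [← ominus_inf, h, ominus_zero]

lemma oplus_eq_sup_of_inf_eq_zero {x y : M} (h : x ⊓ y = 0) : oplus x y = x ⊔ y := by
  rw [← oplus_ominus, ominus_eq_self_of_inf_eq_zero (inf_comm x y ▸ h)]

lemma inf_oplus_le (a x y : M) : a ⊓ oplus x y ≤ oplus (a ⊓ x) (a ⊓ y) := by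
  set t := a ⊓ oplus x y
  have hta : t ≤ a := inf_le_left
  have hrest : ominus t x ≤ a ⊓ y :=
    le_inf ((ominus_le_self t x).trans hta)
      ((ominus_le_ominus_right x inf_le_right).trans (ominus_oplus_le x y))
  have hcut : ominus t (a ⊓ x) = ominus t x := by
    rw [← ominus_inf t (a ⊓ x), ← ominus_inf t x, ← inf_assoc, inf_eq_left.mpr hta]
  calc t ≤ a ⊓ x ⊔ t := le_sup_right
    _ = oplus (a ⊓ x) (ominus t x) := by rw [← hcut, oplus_ominus]
    _ ≤ oplus (a ⊓ x) (a ⊓ y) := oplus_le_oplus_left _ hrest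

lemma sup_ominus_cancel_left {u v : M} (h : u ⊓ v = 0) : ominus (u ⊔ v) u = v := by
  apply le_antisymm
  · rw [← oplus_eq_sup_of_inf_eq_zero h]
    exact ominus_oplus_le u v
  · calc v = ominus v u := (ominus_eq_self_of_inf_eq_zero (inf_comm u v ▸ h)).symm
      _ ≤ ominus (u ⊔ v) u := ominus_le_ominus_right u le_sup_right

lemma sup_inf_eq_left_of_le_of_inf_eq_zero {u v c : M} (huc : u ≤ c) (hvc : v ⊓ c = 0) :
    (u ⊔ v) ⊓ c = u := by
  rw [inf_sup_right, inf_eq_left.mpr huc, hvc, sup_eq_left.mpr (zero_le u)]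

lemma IsIdem.oplus {a b : M} (ha : IsIdem a) (hb : IsIdem b) : IsIdem (WEMV.oplus a b) := by
  unfold IsIdem at *
  rw [oplus_assoc, ← oplus_assoc b a b, oplus_comm b a, oplus_assoc a b b, hb,
    ← oplus_assoc, ha]

lemma zero_mem_idemBounded : (0 : M) ∈ idemBounded M :=
  ⟨0, oplus_zero 0, le_rfl⟩

lemma zero_mem_idemDisjoint : (0 : M) ∈ idemDisjoint M :=
  fun _ _ => eq_zero_of_le_zero inf_le_left

lemma mem_idemBounded_of_le {x y : M} (hxy : x ≤ y) (hy : y ∈ idemBounded M) :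
    x ∈ idemBounded M :=
  let ⟨a, ha, hya⟩ := hy
  ⟨a, ha, hxy.trans hya⟩

lemma mem_idemDisjoint_of_le {x y : M} (hxy : x ≤ y) (hy : y ∈ idemDisjoint M) :
    x ∈ idemDisjoint M :=
  fun a ha => eq_zero_of_le_zero ((inf_le_inf_right a hxy).trans (hy a ha).le)

lemma oplus_mem_idemBounded {x y : M} (hx : x ∈ idemBounded M) (hy : y ∈ idemBounded M) :
    oplus x y ∈ idemBounded M :=
  let ⟨a, ha, hxa⟩ := hx
  let ⟨b, hb, hyb⟩ := hy
  ⟨oplus a b, ha.oplus hb, oplus_le_oplus hxa hyb⟩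

lemma sup_mem_idemBounded {x y : M} (hx : x ∈ idemBounded M) (hy : y ∈ idemBounded M) :
    x ⊔ y ∈ idemBounded M :=
  mem_idemBounded_of_le (sup_le (le_oplus_left x y) (le_oplus_right x y))
    (oplus_mem_idemBounded hx hy)

lemma sup_mem_idemDisjoint {x y : M} (hx : x ∈ idemDisjoint M) (hy : y ∈ idemDisjoint M) :
    x ⊔ y ∈ idemDisjoint M := by
  intro a ha
  rw [inf_sup_right, hx a ha, hy a ha, sup_idem]

lemma oplus_mem_idemDisjoint {x y : M} (hx : x ∈ idemDisjoint M) (hy : y ∈ idemDisjoint M) :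
    oplus x y ∈ idemDisjoint M := by
  intro a ha
  apply eq_zero_of_le_zero
  calc oplus x y ⊓ a = a ⊓ oplus x y := inf_comm _ _
    _ ≤ oplus (a ⊓ x) (a ⊓ y) := inf_oplus_le a x y
    _ = 0 := by rw [inf_comm a x, inf_comm a y, hx a ha, hy a ha, oplus_zero]

lemma eq_zero_of_isIdem_of_mem_idemDisjoint {x : M} (hx : x ∈ idemDisjoint M) (h : IsIdem x) :
    x = 0 :=
  inf_idem x ▸ hx x h

lemma inf_eq_zero_of_mem_idemBounded_of_mem_idemDisjoint {x y : M} (hx : x ∈ idemBounded M)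
    (hy : y ∈ idemDisjoint M) : x ⊓ y = 0 :=
  let ⟨a, ha, hxa⟩ := hx
  eq_zero_of_le_zero (le_inf inf_le_right (inf_le_left.trans hxa) |>.trans (hy a ha).le)

lemma oplus_eq_sup_of_mem_idemBounded_of_mem_idemDisjoint {x y : M} (hx : x ∈ idemBounded M)
    (hy : y ∈ idemDisjoint M) : oplus x y = x ⊔ y :=
  oplus_eq_sup_of_inf_eq_zero (inf_eq_zero_of_mem_idemBounded_of_mem_idemDisjoint hx hy)

lemma eq_and_eq_of_sup_eq {x₁ y₁ x₂ y₂ : M} (hx₁ : x₁ ∈ idemBounded M) (hy₁ : y₁ ∈ idemBounded M)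
    (hx₂ : x₂ ∈ idemDisjoint M) (hy₂ : y₂ ∈ idemDisjoint M) (h : x₁ ⊔ x₂ = y₁ ⊔ y₂) :
    x₁ = y₁ ∧ x₂ = y₂ := by
  obtain ⟨c, hc, hxyc⟩ := sup_mem_idemBounded hx₁ hy₁
  have h₁ : x₁ = y₁ :=
    calc x₁ = (x₁ ⊔ x₂) ⊓ c := (sup_inf_eq_left_of_le_of_inf_eq_zero (le_sup_left.trans hxyc)
          (hx₂ c hc)).symm
      _ = (y₁ ⊔ y₂) ⊓ c := by rw [h]
      _ = y₁ := sup_inf_eq_left_of_le_of_inf_eq_zero (le_sup_right.trans hxyc) (hy₂ c hc)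
  refine ⟨h₁, ?_⟩
  calc x₂ = ominus (x₁ ⊔ x₂) x₁ := (sup_ominus_cancel_left
        (inf_eq_zero_of_mem_idemBounded_of_mem_idemDisjoint hx₁ hx₂)).symm
    _ = ominus (y₁ ⊔ y₂) y₁ := by rw [h, h₁]
    _ = y₂ := sup_ominus_cancel_left (inf_eq_zero_of_mem_idemBounded_of_mem_idemDisjoint hy₁ hy₂)

lemma eq_and_eq_of_oplus_eq {x₁ y₁ x₂ y₂ : M} (hx₁ : x₁ ∈ idemBounded M)
    (hy₁ : y₁ ∈ idemBounded M) (hx₂ : x₂ ∈ idemDisjoint M) (hy₂ : y₂ ∈ idemDisjoint M)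
    (h : oplus x₁ x₂ = oplus y₁ y₂) : x₁ = y₁ ∧ x₂ = y₂ := by
  rw [oplus_eq_sup_of_mem_idemBounded_of_mem_idemDisjoint hx₁ hx₂,
    oplus_eq_sup_of_mem_idemBounded_of_mem_idemDisjoint hy₁ hy₂] at h
  exact eq_and_eq_of_sup_eq hx₁ hy₁ hx₂ hy₂ h

end WEMV

theorem stmt16 {M : Type u} [WEMV M] :
    let M₁ : Set M := {x | ∃ a : M, oplus a a = a ∧ x ≤ a}
    let M₂ : Set M := {x | ∀ a : M, oplus a a = a → x ⊓ a = 0}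
    ((0 : M) ∈ M₁ ∧ (0 : M) ∈ M₂) ∧
    (∀ x ∈ M₁, ∀ y ∈ M₁, x ⊔ y ∈ M₁ ∧ x ⊓ y ∈ M₁ ∧ oplus x y ∈ M₁ ∧ ominus x y ∈ M₁) ∧
    (∀ x ∈ M₂, ∀ y ∈ M₂, x ⊔ y ∈ M₂ ∧ x ⊓ y ∈ M₂ ∧ oplus x y ∈ M₂ ∧ ominus x y ∈ M₂) ∧
    (∀ x ∈ M₂, oplus x x = x → x = 0) ∧
    (∀ x ∈ M₁, ∀ y ∈ M₂, x ⊓ y = 0 ∧ oplus x y = x ⊔ y) ∧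
    (∀ x₁ ∈ M₁, ∀ y₁ ∈ M₁, ∀ x₂ ∈ M₂, ∀ y₂ ∈ M₂,
      (x₁ ⊔ x₂ = y₁ ⊔ y₂ → x₁ = y₁ ∧ x₂ = y₂) ∧
      (oplus x₁ x₂ = oplus y₁ y₂ → x₁ = y₁ ∧ x₂ = y₂)) := by
  intro M₁ M₂
  refine ⟨⟨zero_mem_idemBounded, zero_mem_idemDisjoint⟩, fun x hx y hy => ?_,
    fun x hx y hy => ?_, fun x hx => eq_zero_of_isIdem_of_mem_idemDisjoint hx,
    fun x hx y hy => ⟨inf_eq_zero_of_mem_idemBounded_of_mem_idemDisjoint hx hy,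
      oplus_eq_sup_of_mem_idemBounded_of_mem_idemDisjoint hx hy⟩,
    fun x₁ hx₁ y₁ hy₁ x₂ hx₂ y₂ hy₂ =>
      ⟨eq_and_eq_of_sup_eq hx₁ hy₁ hx₂ hy₂, eq_and_eq_of_oplus_eq hx₁ hy₁ hx₂ hy₂⟩⟩
  · exact ⟨sup_mem_idemBounded hx hy, mem_idemBounded_of_le inf_le_left hx,
      oplus_mem_idemBounded hx hy, mem_idemBounded_of_le (ominus_le_self x y) hx⟩
  · exact ⟨sup_mem_idemDisjoint hx hy, mem_idemDisjoint_of_le inf_le_left hx,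
      oplus_mem_idemDisjoint hx hy, mem_idemDisjoint_of_le (ominus_le_self x y) hx⟩
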